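/- arXiv:2405.13591 — 6 statements merged into one kernel-verified Lean document; each statement's English description precedes it below -/
import Mathlib

section
/- Let (Ω, P) be a probability space, p ≥ 1, and let X, W : Ω → (Fin p → ℝ) be independent random vectors whose coordinates are all square-integrable. Assume E[W_j] = 0 for every j and Cov(W_j, W_k) = Cov(X_j, X_k) for all coordinates j, k, and let τ ≠ 0 be a real number. Define X⁽¹⁾ = X + τ·W and X⁽²⁾ = X − (1/τ)·W. Then for all coordinates j, k one has Cov(X⁽¹⁾_j, X⁽²⁾_k) = 0. -/
open MeasureTheory ProbabilityTheory

/-- Covariance of two real-valued random variables: `E[UV] - E[U]E[V]`. -/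
noncomputable def cov {Ω : Type*} [MeasurableSpace Ω] (P : Measure Ω) (U V : Ω → ℝ) : ℝ :=
  (∫ ω, U ω * V ω ∂P) - (∫ ω, U ω ∂P) * (∫ ω, V ω ∂P)

/-!
Covariance is bilinear on square-integrable variables, so
`Cov(X₁ + τW₁, X₂ - τ⁻¹W₂) = Cov(X₁, X₂) - τ⁻¹ Cov(X₁, W₂) + τ Cov(W₁, X₂) - Cov(W₁, W₂)`.
The cross terms vanish by independence of `X` and `W`, and the remaining two cancel because `W`
has the same covariance matrix as `X`.
-/

namespace ProbabilityTheory

variable {Ω : Type*} [MeasurableSpace Ω] {μ : Measure Ω} {X₁ X₂ W₁ W₂ : Ω → ℝ}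

lemma cov_eq_covariance [IsProbabilityMeasure μ] (hX₁ : MemLp X₁ 2 μ) (hX₂ : MemLp X₂ 2 μ) :
    cov μ X₁ X₂ = cov[X₁, X₂; μ] :=
  (covariance_eq_sub hX₁ hX₂).symm

lemma covariance_add_const_mul_add_const_mul [IsFiniteMeasure μ]
    (hX₁ : MemLp X₁ 2 μ) (hX₂ : MemLp X₂ 2 μ) (hW₁ : MemLp W₁ 2 μ) (hW₂ : MemLp W₂ 2 μ)
    (a b : ℝ) :
    cov[fun ω ↦ X₁ ω + a * W₁ ω, fun ω ↦ X₂ ω + b * W₂ ω; μ] =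
      cov[X₁, X₂; μ] + b * cov[X₁, W₂; μ] + a * cov[W₁, X₂; μ] + a * b * cov[W₁, W₂; μ] := by
  have haW₁ : MemLp (fun ω ↦ a * W₁ ω) 2 μ := hW₁.const_mul a
  have hbW₂ : MemLp (fun ω ↦ b * W₂ ω) 2 μ := hW₂.const_mul b
  change cov[X₁ + fun ω ↦ a * W₁ ω, X₂ + fun ω ↦ b * W₂ ω; μ] = _
  rw [covariance_add_left hX₁ haW₁ (hX₂.add hbW₂), covariance_add_right hX₁ hX₂ hbW₂,
    covariance_add_right haW₁ hX₂ hbW₂, covariance_const_mul_right, covariance_const_mul_left,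
    covariance_const_mul_left, covariance_const_mul_right]
  ring

lemma covariance_fission_eq_zero [IsFiniteMeasure μ]
    (hX₁ : MemLp X₁ 2 μ) (hX₂ : MemLp X₂ 2 μ) (hW₁ : MemLp W₁ 2 μ) (hW₂ : MemLp W₂ 2 μ)
    (hX₁W₂ : IndepFun X₁ W₂ μ) (hW₁X₂ : IndepFun W₁ X₂ μ)
    (hcov : cov[W₁, W₂; μ] = cov[X₁, X₂; μ]) {τ : ℝ} (hτ : τ ≠ 0) :
    cov[fun ω ↦ X₁ ω + τ * W₁ ω, fun ω ↦ X₂ ω - 1 / τ * W₂ ω; μ] = 0 := by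
  simp_rw [sub_eq_add_neg, ← neg_mul]
  rw [covariance_add_const_mul_add_const_mul hX₁ hX₂ hW₁ hW₂, hX₁W₂.covariance_eq_zero hX₁ hW₂,
    hW₁X₂.covariance_eq_zero hW₁ hX₂, hcov]
  field_simp
  ring

end ProbabilityTheory

theorem data_fission_zero_covariance_general
    {Ω : Type*} [MeasurableSpace Ω] (P : Measure Ω) [IsProbabilityMeasure P]
    (p : ℕ) (X W : Ω → Fin p → ℝ)
    (hXW : IndepFun X W P)
    (hX2 : ∀ j, MemLp (fun ω => X ω j) 2 P)
    (hW2 : ∀ j, MemLp (fun ω => W ω j) 2 P)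
    (hcovWX : ∀ j k, cov P (fun ω => W ω j) (fun ω => W ω k)
      = cov P (fun ω => X ω j) (fun ω => X ω k))
    (τ : ℝ) (hτ : τ ≠ 0) :
    ∀ j k, cov P (fun ω => X ω j + τ * W ω j) (fun ω => X ω k - (1 / τ) * W ω k) = 0 := by
  intro j k
  have hcov := hcovWX j k
  rw [cov_eq_covariance (hW2 j) (hW2 k), cov_eq_covariance (hX2 j) (hX2 k)] at hcov
  rw [cov_eq_covariance]
  · exact covariance_fission_eq_zero (hX2 j) (hX2 k) (hW2 j) (hW2 k)
      (hXW.comp (measurable_pi_apply j) (measurable_pi_apply k))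
      (hXW.symm.comp (measurable_pi_apply j) (measurable_pi_apply k)) hcov hτ
  · exact (hX2 j).add ((hW2 j).const_mul τ)
  · exact (hX2 k).sub ((hW2 k).const_mul (1 / τ))

theorem data_fission_zero_covariance
    {Ω : Type*} [MeasurableSpace Ω] (P : Measure Ω) [IsProbabilityMeasure P]
    (p : ℕ) (hp : 1 ≤ p) (X W : Ω → Fin p → ℝ)
    (hX : Measurable X) (hW : Measurable W)
    (hXW : IndepFun X W P)
    (hX2 : ∀ j, MemLp (fun ω => X ω j) 2 P)
    (hW2 : ∀ j, MemLp (fun ω => W ω j) 2 P)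
    (hWmean : ∀ j, (∫ ω, W ω j ∂P) = 0)
    (hcovWX : ∀ j k, cov P (fun ω => W ω j) (fun ω => W ω k)
      = cov P (fun ω => X ω j) (fun ω => X ω k))
    (τ : ℝ) (hτ : τ ≠ 0) :
    ∀ j k, cov P (fun ω => X ω j + τ * W ω j) (fun ω => X ω k - (1 / τ) * W ω k) = 0 :=
  data_fission_zero_covariance_general P p X W hXW hX2 hW2 hcovWX τ hτ
end

section
/- Let (Ω, P) be a probability space and let X, W : Ω → ℝ be independent random variables with X distributed as the Gaussian measure with mean μ and variance σ² and W distributed as the Gaussian measure with mean 0 and variance σ², where σ² > 0. For any real τ > 0, the random variables X⁽¹⁾ = X + τ·W and X⁽²⁾ = X − (1/τ)·W are independent. -/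
open MeasureTheory ProbabilityTheory

/-! Independent Gaussians `X`, `W` are jointly Gaussian, hence so is the linear image
`(X + τ W, X - W / τ)`. For a jointly Gaussian pair, independence is equivalent to vanishing
covariance, and by bilinearity `Cov(X + τ W, X - W / τ) = Var X - Var W`, which is `0` because
`X` and `W` have the same variance. -/

namespace ProbabilityTheory

variable {Ω : Type*} [MeasurableSpace Ω] {P : Measure Ω}

lemma HasLaw.of_map_eq {𝓧 : Type*} [MeasurableSpace 𝓧] {X : Ω → 𝓧} {μ : Measure 𝓧} [NeZero μ]
    (h : P.map X = μ) : HasLaw X μ P where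
  aemeasurable := .of_map_ne_zero (h ▸ NeZero.ne μ)
  map_eq := h

variable {X W : Ω → ℝ}

lemma HasGaussianLaw.data_fission (hXW : HasGaussianLaw (fun ω ↦ (X ω, W ω)) P) (τ : ℝ) :
    HasGaussianLaw (fun ω ↦ (X ω + τ * W ω, X ω - (1 / τ) * W ω)) P := by
  let x : ℝ × ℝ →L[ℝ] ℝ := .fst ℝ ℝ ℝ
  let w : ℝ × ℝ →L[ℝ] ℝ := .snd ℝ ℝ ℝ
  let L := (x + τ • w).prod (x - (1 / τ) • w)
  simpa [L, x, w] using hXW.map_fun L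

lemma IndepFun.covariance_data_fission [IsFiniteMeasure P] (hXW : IndepFun X W P)
    (hX : MemLp X 2 P) (hW : MemLp W 2 P) {τ : ℝ} (hτ : τ ≠ 0) :
    cov[fun ω ↦ X ω + τ * W ω, fun ω ↦ X ω - (1 / τ) * W ω; P] = Var[X; P] - Var[W; P] := by
  have hτW : MemLp (fun ω ↦ τ * W ω) 2 P := hW.const_mul τ
  have hτW' : MemLp (fun ω ↦ (1 / τ) * W ω) 2 P := hW.const_mul _
  change cov[X + fun ω ↦ τ * W ω, X - fun ω ↦ (1 / τ) * W ω; P] = _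
  rw [covariance_add_left hX hτW (hX.sub hτW'), covariance_sub_right hX hX hτW',
    covariance_sub_right hτW hX hτW', covariance_const_mul_right, covariance_const_mul_left,
    covariance_const_mul_left, covariance_const_mul_right, hXW.covariance_eq_zero hX hW,
    covariance_comm W X, hXW.covariance_eq_zero hX hW, covariance_self hX.aemeasurable,
    covariance_self hW.aemeasurable]
  field_simp
  ring

end ProbabilityTheory

theorem gaussian_data_fission_indep_general
    {Ω : Type*} [MeasurableSpace Ω] (P : Measure Ω) [IsProbabilityMeasure P]
    (X W : Ω → ℝ)
    (hXW : IndepFun X W P)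
    (μ : ℝ) (σ2 : ℝ)
    (hXlaw : P.map X = gaussianReal μ σ2.toNNReal)
    (hWlaw : P.map W = gaussianReal 0 σ2.toNNReal)
    (τ : ℝ) (hτ : 0 < τ) :
    IndepFun (fun ω => X ω + τ * W ω) (fun ω => X ω - (1 / τ) * W ω) P := by
  have hXlaw' : HasLaw X (gaussianReal μ σ2.toNNReal) P := .of_map_eq hXlaw
  have hWlaw' : HasLaw W (gaussianReal 0 σ2.toNNReal) P := .of_map_eq hWlaw
  have hXG := hXlaw'.hasGaussianLaw
  have hWG := hWlaw'.hasGaussianLaw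
  refine ((hXW.hasGaussianLaw hXG hWG).data_fission τ).indepFun_of_covariance_eq_zero ?_
  rw [hXW.covariance_data_fission hXG.memLp_two hWG.memLp_two hτ.ne', hXlaw'.variance_eq,
    hWlaw'.variance_eq, variance_id_gaussianReal, variance_id_gaussianReal, sub_self]

theorem gaussian_data_fission_indep
    {Ω : Type*} [MeasurableSpace Ω] (P : Measure Ω) [IsProbabilityMeasure P]
    (X W : Ω → ℝ) (hX : Measurable X) (hW : Measurable W)
    (hXW : IndepFun X W P)
    (μ : ℝ) (σ2 : ℝ) (hσ2 : 0 < σ2)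
    (hXlaw : P.map X = gaussianReal μ σ2.toNNReal)
    (hWlaw : P.map W = gaussianReal 0 σ2.toNNReal)
    (τ : ℝ) (hτ : 0 < τ) :
    IndepFun (fun ω => X ω + τ * W ω) (fun ω => X ω - (1 / τ) * W ω) P :=
  gaussian_data_fission_indep_general P X W hXW μ σ2 hXlaw hWlaw τ hτ
end

section
/- Let (Ω, P) be a probability space, G ≥ 1, Z : Ω → Fin G, p ≥ 1, and X, W : Ω → (Fin p → ℝ) random vectors with square-integrable coordinates such that W is independent of the pair (X, Z). Assume E[W_j] = 0 and write Σ_{jk} = Cov(W_j, W_k) for all j, k. Fix g with P(Z = g) > 0 and write Σ_{g,jk} for the covariance of X_j and X_k under the conditional measure P(· | Z = g). Let τ > 0 and define X⁽¹⁾ = X + τ·W, X⁽²⁾ = X − (1/τ)·W. Then for all coordinates j, k, the covariance of X⁽¹⁾_j and X⁽²⁾_k under P(· | Z = g) equals Σ_{g,jk} − Σ_{jk}. -/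
/-! The event `{Z = g}` lies in `σ(X, Z)`, so conditioning on it keeps `(X, Z)` independent of `W`
and leaves the law of `W` unchanged. Under `P(· | Z = g)` the cross covariances of `X` and `W`
therefore vanish and the covariance of `W` is still `Σ`, and bilinearity gives
`Σ_g - τ · τ⁻¹ · Σ = Σ_g - Σ`. -/

open MeasureTheory ProbabilityTheory

lemma MeasureTheory.MemLp.cond {Ω E : Type*} {mΩ : MeasurableSpace Ω} [NormedAddCommGroup E]
    {μ : Measure Ω} {f : Ω → E} {p : ENNReal} (hf : MemLp f p μ) {s : Set Ω} (hμs : μ s ≠ 0) :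
    MemLp f p μ[|s] :=
  (hf.restrict s).smul_measure (ENNReal.inv_ne_top.2 hμs)

namespace ProbabilityTheory

section Cond

variable {Ω α β : Type*} {mΩ : MeasurableSpace Ω} {mα : MeasurableSpace α}
  {mβ : MeasurableSpace β} {μ : Measure Ω} [IsFiniteMeasure μ] {f : Ω → α} {g : Ω → β}
  {A : Set Ω}

lemma IndepFun.cond_apply_preimage_right (hfg : f ⟂ᵢ[μ] g) (hg : Measurable g)
    (hA : MeasurableSet[mα.comap f] A) (hμA : μ A ≠ 0) {t : Set β} (ht : MeasurableSet t) :
    μ[g ⁻¹' t | A] = μ (g ⁻¹' t) := by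
  obtain ⟨s, hs, rfl⟩ := hA
  rw [cond_apply' (hg ht), indepFun_iff_measure_inter_preimage_eq_mul.1 hfg s t hs ht,
    ENNReal.inv_mul_cancel_left hμA (measure_ne_top _ _)]

lemma IndepFun.map_cond_right (hfg : f ⟂ᵢ[μ] g) (hg : Measurable g)
    (hA : MeasurableSet[mα.comap f] A) (hμA : μ A ≠ 0) :
    (μ[|A]).map g = μ.map g :=
  Measure.ext fun t ht ↦ by
    rw [Measure.map_apply hg ht, Measure.map_apply hg ht,
      hfg.cond_apply_preimage_right hg hA hμA ht]

lemma IndepFun.cond (hfg : f ⟂ᵢ[μ] g) (hf : Measurable f) (hg : Measurable g)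
    (hA : MeasurableSet[mα.comap f] A) (hμA : μ A ≠ 0) :
    f ⟂ᵢ[μ[|A]] g := by
  rw [indepFun_iff_measure_inter_preimage_eq_mul]
  intro B C hB hC
  rw [hfg.cond_apply_preimage_right hg hA hμA hC, cond_apply' (hf hB),
    cond_apply' ((hf hB).inter (hg hC))]
  obtain ⟨s, hs, rfl⟩ := hA
  rw [← Set.inter_assoc, ← Set.preimage_inter,
    indepFun_iff_measure_inter_preimage_eq_mul.1 hfg _ _ (hs.inter hB) hC, mul_assoc]

end Cond

lemma cov_eq_covariance_s5 {Ω : Type*} {mΩ : MeasurableSpace Ω} {μ : Measure Ω}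
    [IsProbabilityMeasure μ] {U V : Ω → ℝ} (hU : MemLp U 2 μ) (hV : MemLp V 2 μ) :
    cov μ U V = cov[U, V; μ] :=
  (covariance_eq_sub hU hV).symm

lemma covariance_add_mul_sub_mul {Ω : Type*} {mΩ : MeasurableSpace Ω} {μ : Measure Ω}
    [IsFiniteMeasure μ] {U V U' V' : Ω → ℝ} (hU : MemLp U 2 μ) (hV : MemLp V 2 μ)
    (hU' : MemLp U' 2 μ) (hV' : MemLp V' 2 μ) (a b : ℝ) :
    cov[fun ω ↦ U ω + a * V ω, fun ω ↦ U' ω - b * V' ω; μ]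
      = cov[U, U'; μ] - b * cov[U, V'; μ] + a * cov[V, U'; μ] - a * b * cov[V, V'; μ] := by
  rw [show (fun ω ↦ U ω + a * V ω) = U + fun ω ↦ a * V ω from rfl,
    covariance_fun_sub_right (hU.add (hV.const_mul a)) hU' (hV'.const_mul b),
    covariance_const_mul_right, covariance_add_left hU (hV.const_mul a) hU',
    covariance_add_left hU (hV.const_mul a) hV',
    covariance_const_mul_left, covariance_const_mul_left]
  ring

end ProbabilityTheory

theorem marginal_fission_conditional_covariance_general
    {Ω : Type*} [MeasurableSpace Ω] (P : Measure Ω) [IsProbabilityMeasure P]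
    (G : ℕ) (Z : Ω → Fin G) (hZ : Measurable Z)
    (p : ℕ) (X W : Ω → Fin p → ℝ)
    (hX : Measurable X) (hW : Measurable W)
    (hindep : IndepFun (fun ω => (X ω, Z ω)) W P)
    (hX2 : ∀ j, MemLp (fun ω => X ω j) 2 P)
    (hW2 : ∀ j, MemLp (fun ω => W ω j) 2 P)
    (Sig : Fin p → Fin p → ℝ)
    (hSig : ∀ j k, Sig j k = cov P (fun ω => W ω j) (fun ω => W ω k))
    (g : Fin G) (hg : 0 < P (Z ⁻¹' {g}))
    (Sigg : Fin p → Fin p → ℝ)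
    (hSigg : ∀ j k, Sigg j k
      = cov (P[|Z ⁻¹' {g}]) (fun ω => X ω j) (fun ω => X ω k))
    (τ : ℝ) (hτ : 0 < τ) :
    ∀ j k, cov (P[|Z ⁻¹' {g}])
        (fun ω => X ω j + τ * W ω j) (fun ω => X ω k - (1 / τ) * W ω k)
      = Sigg j k - Sig j k := by
  intro j k
  set Q := P[|Z ⁻¹' {g}]
  have hclass : MeasurableSet[MeasurableSpace.comap (fun ω ↦ (X ω, Z ω)) inferInstance]
      (Z ⁻¹' {g}) :=
    ⟨{q | q.2 = g}, measurable_snd (measurableSet_singleton g), rfl⟩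
  have : IsProbabilityMeasure Q := cond_isProbabilityMeasure hg.ne'
  have hXQ (l : Fin p) : MemLp (X · l) 2 Q := (hX2 l).cond hg.ne'
  have hWQ (l : Fin p) : MemLp (W · l) 2 Q := (hW2 l).cond hg.ne'
  have hXW (l m : Fin p) : cov[(X · l), (W · m); Q] = 0 :=
    ((hindep.cond (hX.prodMk hZ) hW hclass hg.ne').comp
      ((measurable_pi_apply l).comp measurable_fst) (measurable_pi_apply m)).covariance_eq_zero
      (hXQ l) (hWQ m)
  have hWW : cov[(W · j), (W · k); Q] = cov[(W · j), (W · k); P] := by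
    rw [← covariance_map_fun (measurable_pi_apply j).aestronglyMeasurable
        (measurable_pi_apply k).aestronglyMeasurable hW.aemeasurable,
      hindep.map_cond_right hW hclass hg.ne', covariance_map_fun
        (measurable_pi_apply j).aestronglyMeasurable (measurable_pi_apply k).aestronglyMeasurable
        hW.aemeasurable]
  have hU : MemLp (fun ω ↦ X ω j + τ * W ω j) 2 Q := (hXQ j).add ((hWQ j).const_mul τ)
  have hV : MemLp (fun ω ↦ X ω k - 1 / τ * W ω k) 2 Q := (hXQ k).sub ((hWQ k).const_mul _)
  rw [hSigg, hSig, cov_eq_covariance_s5 hU hV, cov_eq_covariance_s5 (hXQ j) (hXQ k),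
    cov_eq_covariance_s5 (hW2 j) (hW2 k), covariance_add_mul_sub_mul (hXQ j) (hWQ j) (hXQ k) (hWQ k),
    hXW, covariance_comm (W · j), hXW, hWW, mul_one_div_cancel hτ.ne']
  ring

/-- Marginal data fission in a mixture: conditionally on the class `{Z = g}`, the two
fissioned parts have covariance `Σ_g - Σ`, the difference between the class-specific
covariance of `X` and the (global) covariance of the noise `W`. -/
theorem marginal_fission_conditional_covariance
    {Ω : Type*} [MeasurableSpace Ω] (P : Measure Ω) [IsProbabilityMeasure P]
    (G : ℕ) (hG : 1 ≤ G) (Z : Ω → Fin G) (hZ : Measurable Z)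
    (p : ℕ) (hp : 1 ≤ p) (X W : Ω → Fin p → ℝ)
    (hX : Measurable X) (hW : Measurable W)
    (hindep : IndepFun (fun ω => (X ω, Z ω)) W P)
    (hX2 : ∀ j, MemLp (fun ω => X ω j) 2 P)
    (hW2 : ∀ j, MemLp (fun ω => W ω j) 2 P)
    (hWmean : ∀ j, (∫ ω, W ω j ∂P) = 0)
    (Sig : Fin p → Fin p → ℝ)
    (hSig : ∀ j k, Sig j k = cov P (fun ω => W ω j) (fun ω => W ω k))
    (g : Fin G) (hg : 0 < P (Z ⁻¹' {g}))
    (Sigg : Fin p → Fin p → ℝ)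
    (hSigg : ∀ j k, Sigg j k
      = cov (P[|Z ⁻¹' {g}]) (fun ω => X ω j) (fun ω => X ω k))
    (τ : ℝ) (hτ : 0 < τ) :
    ∀ j k, cov (P[|Z ⁻¹' {g}])
        (fun ω => X ω j + τ * W ω j) (fun ω => X ω k - (1 / τ) * W ω k)
      = Sigg j k - Sig j k :=
  marginal_fission_conditional_covariance_general P G Z hZ p X W hX hW hindep hX2 hW2 Sig hSig g hg
    Sigg hSigg τ hτ
end

section
/- Let (Ω, P) be a probability space and X, W : Ω → ℝ independent square-integrable random variables with Var(X) = σ², E[W] = 0, Var(W) = b², and let τ > 0. Define X⁽¹⁾ = X + τ·W and X⁽²⁾ = X − (1/τ)·W. Then Var(X⁽¹⁾) = σ² + τ²b², Var(X⁽²⁾) = σ² + b²/τ², and, if σ² + τ²b² > 0 and σ² + b²/τ² > 0, the correlation of X⁽¹⁾ and X⁽²⁾ equals (σ² − b²) / √((σ² + τ²b²)(σ² + b²/τ²)). -/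
/-!
Covariance is bilinear and independence kills the cross terms, so
`cov(X + aW, X + bW) = Var X + ab · Var W`. The variances are the case `a = b`, and the fission
choice `a = τ`, `b = -1/τ` makes `ab = -1`.
-/

open MeasureTheory ProbabilityTheory

namespace ProbabilityTheory

variable {Ω : Type*} [MeasurableSpace Ω] {μ : Measure Ω} {X Y W : Ω → ℝ}

lemma cov_eq_covariance_s6 [IsProbabilityMeasure μ] (hX : MemLp X 2 μ) (hY : MemLp Y 2 μ) :
    cov μ X Y = cov[X, Y; μ] :=
  (covariance_eq_sub hX hY).symm

lemma IndepFun.covariance_add_const_mul_add_const_mul [IsFiniteMeasure μ] (hXW : X ⟂ᵢ[μ] W)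
    (hX : MemLp X 2 μ) (hW : MemLp W 2 μ) (a b : ℝ) :
    cov[fun ω ↦ X ω + a * W ω, fun ω ↦ X ω + b * W ω; μ] = Var[X; μ] + a * b * Var[W; μ] := by
  have hsplit (c : ℝ) : (fun ω ↦ X ω + c * W ω) = X + fun ω ↦ c * W ω := rfl
  have hXW0 : cov[X, W; μ] = 0 := hXW.covariance_eq_zero hX hW
  have hWX0 : cov[W, X; μ] = 0 := hXW.symm.covariance_eq_zero hW hX
  rw [hsplit, hsplit, covariance_add_left hX (hW.const_mul a) (hX.add (hW.const_mul b)),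
    covariance_add_right hX hX (hW.const_mul b),
    covariance_add_right (hW.const_mul a) hX (hW.const_mul b),
    covariance_const_mul_left, covariance_const_mul_left, covariance_const_mul_right,
    covariance_const_mul_right, covariance_self hX.aemeasurable, covariance_self hW.aemeasurable,
    hXW0, hWX0]
  ring

lemma IndepFun.variance_add_const_mul [IsFiniteMeasure μ] (hXW : X ⟂ᵢ[μ] W)
    (hX : MemLp X 2 μ) (hW : MemLp W 2 μ) (c : ℝ) :
    Var[fun ω ↦ X ω + c * W ω; μ] = Var[X; μ] + c ^ 2 * Var[W; μ] := by
  rw [← covariance_self (X := fun ω ↦ X ω + c * W ω) (hX.add (hW.const_mul c)).aemeasurable,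
    hXW.covariance_add_const_mul_add_const_mul hX hW, sq]

end ProbabilityTheory

theorem data_fission_variances_and_correlation_general
    {Ω : Type*} [MeasurableSpace Ω] (P : Measure Ω) [IsProbabilityMeasure P]
    (X W : Ω → ℝ)
    (hXW : IndepFun X W P)
    (hX2 : MemLp X 2 P) (hW2 : MemLp W 2 P)
    (σ2 b2 : ℝ) (hσ2 : variance X P = σ2)
    (hb2 : variance W P = b2)
    (τ : ℝ) (hτ : 0 < τ) :
    variance (fun ω => X ω + τ * W ω) P = σ2 + τ ^ 2 * b2 ∧
    variance (fun ω => X ω - (1 / τ) * W ω) P = σ2 + b2 / τ ^ 2 ∧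
    (0 < σ2 + τ ^ 2 * b2 → 0 < σ2 + b2 / τ ^ 2 →
      cov P (fun ω => X ω + τ * W ω) (fun ω => X ω - (1 / τ) * W ω)
          / Real.sqrt (variance (fun ω => X ω + τ * W ω) P
              * variance (fun ω => X ω - (1 / τ) * W ω) P)
        = (σ2 - b2) / Real.sqrt ((σ2 + τ ^ 2 * b2) * (σ2 + b2 / τ ^ 2))) := by
  have hsub : (fun ω ↦ X ω - (1 / τ) * W ω) = fun ω ↦ X ω + -(1 / τ) * W ω := by
    simp only [neg_mul, ← sub_eq_add_neg]
  have hmem (c : ℝ) : MemLp (fun ω ↦ X ω + c * W ω) 2 P := hX2.add (hW2.const_mul c)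
  have hvar1 : Var[fun ω ↦ X ω + τ * W ω; P] = σ2 + τ ^ 2 * b2 := by
    rw [hXW.variance_add_const_mul hX2 hW2, hσ2, hb2]
  have hvar2 : Var[fun ω ↦ X ω - (1 / τ) * W ω; P] = σ2 + b2 / τ ^ 2 := by
    rw [hsub, hXW.variance_add_const_mul hX2 hW2, hσ2, hb2]
    ring
  have hcov : cov P (fun ω ↦ X ω + τ * W ω) (fun ω ↦ X ω - (1 / τ) * W ω) = σ2 - b2 := by
    rw [hsub, cov_eq_covariance_s6 (hmem τ) (hmem _),
      hXW.covariance_add_const_mul_add_const_mul hX2 hW2, hσ2, hb2, mul_neg,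
      mul_one_div_cancel hτ.ne']
    ring
  exact ⟨hvar1, hvar2, fun _ _ ↦ by rw [hcov, hvar1, hvar2]⟩

theorem data_fission_variances_and_correlation
    {Ω : Type*} [MeasurableSpace Ω] (P : Measure Ω) [IsProbabilityMeasure P]
    (X W : Ω → ℝ) (hX : Measurable X) (hW : Measurable W)
    (hXW : IndepFun X W P)
    (hX2 : MemLp X 2 P) (hW2 : MemLp W 2 P)
    (σ2 b2 : ℝ) (hσ2 : variance X P = σ2)
    (hWmean : (∫ ω, W ω ∂P) = 0) (hb2 : variance W P = b2)
    (τ : ℝ) (hτ : 0 < τ) :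
    variance (fun ω => X ω + τ * W ω) P = σ2 + τ ^ 2 * b2 ∧
    variance (fun ω => X ω - (1 / τ) * W ω) P = σ2 + b2 / τ ^ 2 ∧
    (0 < σ2 + τ ^ 2 * b2 → 0 < σ2 + b2 / τ ^ 2 →
      cov P (fun ω => X ω + τ * W ω) (fun ω => X ω - (1 / τ) * W ω)
          / Real.sqrt (variance (fun ω => X ω + τ * W ω) P
              * variance (fun ω => X ω - (1 / τ) * W ω) P)
        = (σ2 - b2) / Real.sqrt ((σ2 + τ ^ 2 * b2) * (σ2 + b2 / τ ^ 2))) :=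
  data_fission_variances_and_correlation_general P X W hXW hX2 hW2 σ2 b2 hσ2 hb2 τ hτ
end

section
/- Let (Ω, P) be a probability space, σ² > 0, 0 < ε < 1, and let X, Z : Ω → ℝ be independent with X ~ N(μ, σ²) and Z ~ N(0, ε(1−ε)σ²). Define X⁽¹⁾ = ε·X + Z and X⁽²⁾ = X − X⁽¹⁾ = (1−ε)·X − Z. Then X⁽¹⁾ and X⁽²⁾ are independent, X⁽¹⁾ has law N(ε·μ, ε·σ²), and X⁽²⁾ has law N((1−ε)·μ, (1−ε)·σ²). -/
open MeasureTheory ProbabilityTheory Real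
open scoped NNReal ENNReal

noncomputable section
namespace GaussianThinningAux

def Tmat (ε : ℝ) : Matrix (Fin 2) (Fin 2) ℝ := !![ε, 1; 1 - ε, -1]
def Smat (ε : ℝ) : Matrix (Fin 2) (Fin 2) ℝ := !![1, 1; 1 - ε, -ε]

def Tlin (ε : ℝ) : (ℝ × ℝ) →ₗ[ℝ] ℝ × ℝ :=
  Matrix.toLin (Module.Basis.finTwoProd ℝ) (Module.Basis.finTwoProd ℝ) (Tmat ε)
def Slin (ε : ℝ) : (ℝ × ℝ) →ₗ[ℝ] ℝ × ℝ :=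
  Matrix.toLin (Module.Basis.finTwoProd ℝ) (Module.Basis.finTwoProd ℝ) (Smat ε)

lemma Tmat_mul_Smat (ε : ℝ) : Tmat ε * Smat ε = 1 := by
  ext i j
  fin_cases i <;> fin_cases j <;>
    simp [Tmat, Smat, Matrix.mul_apply, Fin.sum_univ_two, Matrix.one_apply] <;> ring

lemma Smat_mul_Tmat (ε : ℝ) : Smat ε * Tmat ε = 1 := by
  ext i j
  fin_cases i <;> fin_cases j <;>
    simp [Tmat, Smat, Matrix.mul_apply, Fin.sum_univ_two, Matrix.one_apply] <;> ring

def Lequiv (ε : ℝ) : (ℝ × ℝ) ≃ₗ[ℝ] ℝ × ℝ :=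
  LinearEquiv.ofLinear (Tlin ε) (Slin ε)
    (by rw [Tlin, Slin, ← Matrix.toLin_mul, Tmat_mul_Smat, Matrix.toLin_one])
    (by rw [Tlin, Slin, ← Matrix.toLin_mul, Smat_mul_Tmat, Matrix.toLin_one])

def e (ε : ℝ) : (ℝ × ℝ) ≃ᵐ ℝ × ℝ :=
  (Lequiv ε).toContinuousLinearEquiv.toHomeomorph.toMeasurableEquiv

lemma e_apply (ε : ℝ) (p : ℝ × ℝ) : e ε p = (ε * p.1 + p.2, (1 - ε) * p.1 - p.2) := by
  have : e ε p = Matrix.toLin (Module.Basis.finTwoProd ℝ) (Module.Basis.finTwoProd ℝ) (Tmat ε) p := rfl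
  rw [this, Tmat, Matrix.toLin_finTwoProd_apply]
  norm_num
  ring_nf

lemma e_symm_apply (ε : ℝ) (p : ℝ × ℝ) :
    (e ε).symm p = (p.1 + p.2, (1 - ε) * p.1 - ε * p.2) := by
  have : (e ε).symm p = Matrix.toLin (Module.Basis.finTwoProd ℝ) (Module.Basis.finTwoProd ℝ) (Smat ε) p := rfl
  rw [this, Smat, Matrix.toLin_finTwoProd_apply]
  norm_num
  ring_nf

lemma map_e_volume (ε : ℝ) : Measure.map (e ε) volume = volume := by
  have hdet : LinearMap.det (Tlin ε) = -1 := by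
    rw [Tlin, LinearMap.det_toLin, Tmat, Matrix.det_fin_two_of]
    ring
  have hcoe : ⇑(e ε) = ⇑(Tlin ε) := rfl
  rw [hcoe, Measure.map_linearMap_addHaar_eq_smul_addHaar volume (by rw [hdet]; norm_num),
    hdet]
  norm_num

lemma pdf_identity (μ σ2 ε : ℝ) (hσ2 : 0 < σ2) (hε0 : 0 < ε) (hε1 : ε < 1) (u v : ℝ) :
    gaussianPDFReal μ σ2.toNNReal (u + v)
      * gaussianPDFReal 0 ((ε * (1 - ε) * σ2).toNNReal) ((1 - ε) * u - ε * v)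
    = gaussianPDFReal (ε * μ) ((ε * σ2).toNNReal) u
      * gaussianPDFReal ((1 - ε) * μ) (((1 - ε) * σ2).toNNReal) v := by
  have h1ε : 0 < 1 - ε := by linarith
  have hw : 0 < ε * (1 - ε) * σ2 := by positivity
  have hv1 : 0 < ε * σ2 := by positivity
  have hv2 : 0 < (1 - ε) * σ2 := by positivity
  simp only [gaussianPDFReal, Real.coe_toNNReal _ hσ2.le, Real.coe_toNNReal _ hw.le,
    Real.coe_toNNReal _ hv1.le, Real.coe_toNNReal _ hv2.le]
  rw [mul_mul_mul_comm]
  rw [mul_mul_mul_comm ((√(2 * π * (ε * σ2)))⁻¹)]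
  congr 1
  · rw [← mul_inv, ← mul_inv, ← Real.sqrt_mul (by positivity), ← Real.sqrt_mul (by positivity)]
    congr 2
    ring
  · rw [← Real.exp_add, ← Real.exp_add]
    congr 1
    field_simp
    ring

lemma gaussian_prod_eq_withDensity (a b : ℝ) {v w : ℝ≥0} (hv : v ≠ 0) (hw : w ≠ 0) :
    (gaussianReal a v).prod (gaussianReal b w)
      = (volume : Measure (ℝ × ℝ)).withDensity
          (fun p => gaussianPDF a v p.1 * gaussianPDF b w p.2) := by
  refine Measure.prod_eq fun s t hs ht => ?_
  rw [withDensity_apply _ (hs.prod ht), Measure.volume_eq_prod, ← Measure.prod_restrict,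
    lintegral_prod_mul (measurable_gaussianPDF a v).aemeasurable
      (measurable_gaussianPDF b w).aemeasurable,
    gaussianReal_apply a hv s, gaussianReal_apply b hw t]

lemma map_equiv_withDensity {α β : Type*} [MeasurableSpace α] [MeasurableSpace β]
    (e : α ≃ᵐ β) (μ : Measure α) {h : α → ℝ≥0∞} (hh : Measurable h) :
    Measure.map e (μ.withDensity h) = (Measure.map e μ).withDensity (fun y => h (e.symm y)) := by
  ext s hs
  rw [Measure.map_apply e.measurable hs, withDensity_apply _ (e.measurable hs),
    withDensity_apply _ hs, Measure.restrict_map e.measurable hs,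
    lintegral_map (f := fun y => h (e.symm y)) (hh.comp e.symm.measurable) e.measurable]
  simp

lemma key (μ σ2 ε : ℝ) (hσ2 : 0 < σ2) (hε0 : 0 < ε) (hε1 : ε < 1) :
    Measure.map (e ε)
      ((gaussianReal μ σ2.toNNReal).prod (gaussianReal 0 ((ε * (1 - ε) * σ2).toNNReal)))
    = (gaussianReal (ε * μ) ((ε * σ2).toNNReal)).prod
        (gaussianReal ((1 - ε) * μ) (((1 - ε) * σ2).toNNReal)) := by
  have h1ε : 0 < 1 - ε := by linarith
  have hv : σ2.toNNReal ≠ 0 := (Real.toNNReal_pos.mpr hσ2).ne'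
  have hw : (ε * (1 - ε) * σ2).toNNReal ≠ 0 := (Real.toNNReal_pos.mpr (by positivity)).ne'
  have hv1 : (ε * σ2).toNNReal ≠ 0 := (Real.toNNReal_pos.mpr (by positivity)).ne'
  have hv2 : ((1 - ε) * σ2).toNNReal ≠ 0 := (Real.toNNReal_pos.mpr (by positivity)).ne'
  have hmeas : Measurable (fun p : ℝ × ℝ =>
      gaussianPDF μ σ2.toNNReal p.1 * gaussianPDF 0 ((ε * (1 - ε) * σ2).toNNReal) p.2) :=
    ((measurable_gaussianPDF _ _).comp measurable_fst).mul
      ((measurable_gaussianPDF _ _).comp measurable_snd)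
  rw [gaussian_prod_eq_withDensity _ _ hv hw, map_equiv_withDensity (e ε) volume hmeas,
    map_e_volume, gaussian_prod_eq_withDensity _ _ hv1 hv2]
  congr 1
  funext p
  rw [e_symm_apply]
  simp only [gaussianPDF]
  rw [← ENNReal.ofReal_mul (gaussianPDFReal_nonneg _ _ _),
    ← ENNReal.ofReal_mul (gaussianPDFReal_nonneg _ _ _)]
  exact congrArg ENNReal.ofReal (pdf_identity μ σ2 ε hσ2 hε0 hε1 p.1 p.2)

end GaussianThinningAux
end

open GaussianThinningAux in
/-- Gaussian data thinning: writing `X⁽¹⁾ = εX + Z` with `Z ~ N(0, ε(1-ε)σ²)` independent of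
`X ~ N(μ, σ²)`, and `X⁽²⁾ = X - X⁽¹⁾`, the parts `X⁽¹⁾` and `X⁽²⁾` are independent with laws
`N(εμ, εσ²)` and `N((1-ε)μ, (1-ε)σ²)`. -/
theorem gaussian_data_thinning
    {Ω : Type*} [MeasurableSpace Ω] (P : Measure Ω) [IsProbabilityMeasure P]
    (μ σ2 ε : ℝ) (hσ2 : 0 < σ2) (hε0 : 0 < ε) (hε1 : ε < 1)
    (X Z : Ω → ℝ) (hX : Measurable X) (hZ : Measurable Z)
    (hXZ : IndepFun X Z P)
    (hXlaw : P.map X = gaussianReal μ σ2.toNNReal)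
    (hZlaw : P.map Z = gaussianReal 0 ((ε * (1 - ε) * σ2).toNNReal)) :
    IndepFun (fun ω => ε * X ω + Z ω) (fun ω => X ω - (ε * X ω + Z ω)) P ∧
    P.map (fun ω => ε * X ω + Z ω) = gaussianReal (ε * μ) ((ε * σ2).toNNReal) ∧
    P.map (fun ω => X ω - (ε * X ω + Z ω))
      = gaussianReal ((1 - ε) * μ) (((1 - ε) * σ2).toNNReal) := by
  have hU : Measurable (fun ω => ε * X ω + Z ω) := (hX.const_mul ε).add hZ
  have hV : Measurable (fun ω => X ω - (ε * X ω + Z ω)) := hX.sub hU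
  have hpair : P.map (fun ω => (X ω, Z ω))
      = (gaussianReal μ σ2.toNNReal).prod (gaussianReal 0 ((ε * (1 - ε) * σ2).toNNReal)) := by
    rw [← hXlaw, ← hZlaw]
    exact (indepFun_iff_map_prod_eq_prod_map_map hX.aemeasurable hZ.aemeasurable).mp hXZ
  have hcomp : (fun ω => (ε * X ω + Z ω, X ω - (ε * X ω + Z ω)))
      = (e ε) ∘ (fun ω => (X ω, Z ω)) := by
    funext ω
    rw [Function.comp_apply, e_apply]
    exact Prod.ext rfl (by ring)
  have hUV : P.map (fun ω => (ε * X ω + Z ω, X ω - (ε * X ω + Z ω)))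
      = (gaussianReal (ε * μ) ((ε * σ2).toNNReal)).prod
          (gaussianReal ((1 - ε) * μ) (((1 - ε) * σ2).toNNReal)) := by
    rw [hcomp, ← Measure.map_map (e ε).measurable (hX.prodMk hZ), hpair,
      key μ σ2 ε hσ2 hε0 hε1]
  have hm1 : P.map (fun ω => ε * X ω + Z ω) = gaussianReal (ε * μ) ((ε * σ2).toNNReal) := by
    have h : (fun ω => ε * X ω + Z ω)
        = Prod.fst ∘ (fun ω => (ε * X ω + Z ω, X ω - (ε * X ω + Z ω))) := rfl
    rw [h, ← Measure.map_map measurable_fst (hU.prodMk hV), hUV, Measure.map_fst_prod]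
    simp
  have hm2 : P.map (fun ω => X ω - (ε * X ω + Z ω))
      = gaussianReal ((1 - ε) * μ) (((1 - ε) * σ2).toNNReal) := by
    have h : (fun ω => X ω - (ε * X ω + Z ω))
        = Prod.snd ∘ (fun ω => (ε * X ω + Z ω, X ω - (ε * X ω + Z ω))) := rfl
    rw [h, ← Measure.map_map measurable_snd (hU.prodMk hV), hUV, Measure.map_snd_prod]
    simp
  refine ⟨?_, hm1, hm2⟩
  rw [indepFun_iff_map_prod_eq_prod_map_map hU.aemeasurable hV.aemeasurable, hUV, hm1, hm2]
end

section
/- Let (Ω, P) be a probability space and X, W : Ω → ℝ independent with X ~ N(μ, σ²), σ > 0, and W ~ N(0, b²), b > 0, and let τ > 0. Define X⁽¹⁾ = X + τ·W and X⁽²⁾ = X − (1/τ)·W, and set σ²₁ = σ² + τ²b², σ²₂ = σ² + b²/τ², and ρ = (σ² − b²)/√(σ²₁·σ²₂). Then, for almost every x with respect to the law of X⁽¹⁾, the conditional distribution of X⁽²⁾ given X⁽¹⁾ = x is the Gaussian distribution N(μ + ρ·(σ₂/σ₁)·(x − μ), σ²₂·(1 − ρ²)). -/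
/-!
With `c = Cov(X⁽¹⁾, X⁽²⁾) / Var X⁽¹⁾`, the residual `Z = X⁽²⁾ - c X⁽¹⁾` is, like `X⁽¹⁾`, a linear
image of the Gaussian pair `(X, W)` and is uncorrelated with `X⁽¹⁾`; jointly Gaussian and
uncorrelated means independent. Hence given `X⁽¹⁾ = x`, `X⁽²⁾ = c x + Z` has law
`N(c x + E Z, Var Z)`. The moments of `X⁽¹⁾, X⁽²⁾` follow from the independence of `X` and `W`,
and `ρ σ₂ / σ₁ = c`, `σ²₂ (1 - ρ²) = Var Z` translate this into the stated form.
-/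

open MeasureTheory ProbabilityTheory

lemma Real.div_sqrt_mul_mul_sqrt_div_sqrt (c : ℝ) {s₁ s₂ : ℝ} (h₁ : 0 < s₁) (h₂ : 0 < s₂) :
    c / √(s₁ * s₂) * (√s₂ / √s₁) = c / s₁ := by
  rw [Real.sqrt_mul h₁.le]
  field_simp
  rw [Real.sq_sqrt h₁.le]

lemma Real.mul_one_sub_div_sqrt_mul_sq (c : ℝ) {s₁ s₂ : ℝ} (h₁ : 0 < s₁) (h₂ : 0 < s₂) :
    s₂ * (1 - (c / √(s₁ * s₂)) ^ 2) = s₂ - c ^ 2 / s₁ := by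
  rw [div_pow, Real.sq_sqrt (by positivity)]
  field_simp

namespace ProbabilityTheory

section Translate

variable {Ω β G : Type*} [MeasurableSpace Ω] [MeasurableSpace β] [MeasurableSpace G]
  [Add G] [MeasurableAdd₂ G]

noncomputable def Kernel.translate (f : β → G) (hf : Measurable f) (ν : Measure G) : Kernel β G :=
  (Kernel.deterministic f hf ×ₖ Kernel.const β ν).map (fun p => p.1 + p.2)

lemma Kernel.translate_apply {f : β → G} (hf : Measurable f) (ν : Measure G) [SFinite ν] (y : β) :
    Kernel.translate f hf ν y = ν.map (f y + ·) := by
  rw [Kernel.translate, Kernel.map_apply _ (by fun_prop), Kernel.prod_apply,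
    Kernel.deterministic_apply, Kernel.const_apply, Measure.dirac_prod,
    Measure.map_map (by fun_prop) measurable_prodMk_left]
  rfl

instance Kernel.isMarkovKernel_translate {f : β → G} (hf : Measurable f) (ν : Measure G)
    [IsProbabilityMeasure ν] :
    IsMarkovKernel (Kernel.translate f hf ν) :=
  Kernel.IsMarkovKernel.map _ (by fun_prop)

lemma compProd_translate (μ : Measure β) [SFinite μ] {f : β → G} (hf : Measurable f)
    (ν : Measure G) [IsProbabilityMeasure ν] :
    μ ⊗ₘ Kernel.translate f hf ν = (μ.prod ν).map (fun p => (p.1, f p.1 + p.2)) := by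
  have hH : Measurable (fun p : β × G => (p.1, f p.1 + p.2)) := by fun_prop
  ext s hs
  rw [Measure.compProd_apply hs, Measure.map_apply hH hs, Measure.prod_apply (hH hs)]
  refine lintegral_congr fun y => ?_
  rw [Kernel.translate_apply, Measure.map_apply (by fun_prop) (measurable_prodMk_left hs)]
  rfl

variable [StandardBorelSpace G] [Nonempty G]

theorem condDistrib_add_ae_eq_of_indepFun {P : Measure Ω} [IsProbabilityMeasure P]
    {Y : Ω → β} {Z : Ω → G} (hY : AEMeasurable Y P) (hZ : AEMeasurable Z P)
    (hYZ : IndepFun Y Z P) {f : β → G} (hf : Measurable f) :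
    ∀ᵐ y ∂P.map Y, condDistrib (fun ω => f (Y ω) + Z ω) Y P y = (P.map Z).map (f y + ·) := by
  have := Measure.isProbabilityMeasure_map hZ
  have hjoint :
      P.map (fun ω => (Y ω, f (Y ω) + Z ω)) = P.map Y ⊗ₘ Kernel.translate f hf (P.map Z) := by
    rw [compProd_translate, ← (indepFun_iff_map_prod_eq_prod_map_map hY hZ).mp hYZ,
      AEMeasurable.map_map_of_aemeasurable (by fun_prop) (hY.prodMk hZ)]
    rfl
  filter_upwards [condDistrib_ae_eq_of_measure_eq_compProd Y (by fun_prop) hjoint] with y hy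
  rw [hy, Kernel.translate_apply]

end Translate

variable {Ω : Type*} [MeasurableSpace Ω] {P : Measure Ω}

lemma HasGaussianLaw.prodMk_linearComb {X W : Ω → ℝ}
    (h : HasGaussianLaw (fun ω => (X ω, W ω)) P) (a b c d : ℝ) :
    HasGaussianLaw (fun ω => (a * X ω + b * W ω, c * X ω + d * W ω)) P :=
  h.map_fun ((a • ContinuousLinearMap.fst ℝ ℝ ℝ + b • ContinuousLinearMap.snd ℝ ℝ ℝ).prod
    (c • ContinuousLinearMap.fst ℝ ℝ ℝ + d • ContinuousLinearMap.snd ℝ ℝ ℝ))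

theorem HasGaussianLaw.condDistrib_ae_eq_gaussianReal {Y₁ Y₂ : Ω → ℝ}
    [IsProbabilityMeasure P] (h : HasGaussianLaw (fun ω => (Y₁ ω, Y₂ ω)) P) (hv : Var[Y₁; P] ≠ 0) :
    ∀ᵐ x ∂P.map Y₁, condDistrib Y₂ Y₁ P x =
      gaussianReal (P[Y₂] + cov[Y₁, Y₂; P] / Var[Y₁; P] * (x - P[Y₁]))
        (Var[Y₂; P] - cov[Y₁, Y₂; P] ^ 2 / Var[Y₁; P]).toNNReal := by
  set k := cov[Y₁, Y₂; P] / Var[Y₁; P]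
  set Z := fun ω => Y₂ ω - k * Y₁ ω
  have hY₁ : MemLp Y₁ 2 P := h.fst.memLp_two
  have hY₂ : MemLp Y₂ 2 P := h.snd.memLp_two
  have hY₁Z : HasGaussianLaw (fun ω => (Y₁ ω, Z ω)) P := by
    convert h.prodMk_linearComb 1 0 (-k) 1 using 3
    · ring
    · simp only [Z]; ring
  have hcov : cov[Y₁, Z; P] = 0 := by
    rw [covariance_fun_sub_right hY₁ hY₂ (hY₁.const_mul k), covariance_const_mul_right,
      covariance_self hY₁.aemeasurable, div_mul_cancel₀ _ hv, sub_self]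
  have hmean : P[Z] = P[Y₂] - k * P[Y₁] := by
    rw [integral_sub (hY₂.integrable one_le_two) ((hY₁.const_mul k).integrable one_le_two),
      integral_const_mul]
  have hvar : Var[Z; P] = Var[Y₂; P] - cov[Y₁, Y₂; P] ^ 2 / Var[Y₁; P] := by
    rw [variance_fun_sub hY₂ (hY₁.const_mul k), covariance_const_mul_right, variance_const_mul,
      covariance_comm]
    simp only [k]
    field_simp
    ring
  have hY₂_eq : (fun ω => k * Y₁ ω + Z ω) = Y₂ := by ext; simp only [Z]; ring
  filter_upwards [condDistrib_add_ae_eq_of_indepFun h.fst.aemeasurable hY₁Z.snd.aemeasurable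
    (hY₁Z.indepFun_of_covariance_eq_zero hcov) (measurable_const_mul k)] with x hx
  rw [hY₂_eq, hY₁Z.snd.map_eq_gaussianReal, hmean, hvar, gaussianReal_map_const_add] at hx
  rw [hx]
  congr 1
  ring

variable {X W : Ω → ℝ} {m : ℝ} {v : NNReal}

lemma aemeasurable_of_map_eq_gaussianReal (h : P.map X = gaussianReal m v) : AEMeasurable X P :=
  AEMeasurable.of_map_ne_zero (by rw [h]; exact IsProbabilityMeasure.ne_zero _)

lemma integral_eq_of_map_eq_gaussianReal (h : P.map X = gaussianReal m v) : P[X] = m := by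
  rw [(HasLaw.mk (aemeasurable_of_map_eq_gaussianReal h) h).integral_eq, integral_id_gaussianReal]

lemma variance_eq_of_map_eq_gaussianReal (h : P.map X = gaussianReal m v) : Var[X; P] = v := by
  rw [(HasLaw.mk (aemeasurable_of_map_eq_gaussianReal h) h).variance_eq, variance_id_gaussianReal]

lemma integral_const_mul_add_const_mul (hX : Integrable X P) (hW : Integrable W P) (a b : ℝ) :
    P[fun ω => a * X ω + b * W ω] = a * P[X] + b * P[W] := by
  rw [integral_add (hX.const_mul a) (hW.const_mul b), integral_const_mul, integral_const_mul]

lemma IndepFun.covariance_const_mul_add_const_mul [IsFiniteMeasure P] (hXW : IndepFun X W P)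
    (hX : MemLp X 2 P) (hW : MemLp W 2 P) (a b c d : ℝ) :
    cov[fun ω => a * X ω + b * W ω, fun ω => c * X ω + d * W ω; P]
      = a * c * Var[X; P] + b * d * Var[W; P] := by
  change cov[(fun ω => a * X ω) + (fun ω => b * W ω),
    (fun ω => c * X ω) + (fun ω => d * W ω); P] = _
  rw [covariance_add_left (hX.const_mul a) (hW.const_mul b)
      ((hX.const_mul c).add (hW.const_mul d)),
    covariance_add_right (hX.const_mul a) (hX.const_mul c) (hW.const_mul d),
    covariance_add_right (hW.const_mul b) (hX.const_mul c) (hW.const_mul d)]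
  simp only [covariance_const_mul_left, covariance_const_mul_right,
    covariance_self hX.aemeasurable, covariance_self hW.aemeasurable,
    hXW.covariance_eq_zero hX hW, hXW.symm.covariance_eq_zero hW hX]
  ring

end ProbabilityTheory

theorem fission_conditional_distribution_general
    {Ω : Type*} [MeasurableSpace Ω] (P : Measure Ω) [IsProbabilityMeasure P]
    (X W : Ω → ℝ)
    (hXW : IndepFun X W P)
    (μ σ b : ℝ) (hb : 0 < b)
    (hXlaw : P.map X = gaussianReal μ ((σ ^ 2).toNNReal))
    (hWlaw : P.map W = gaussianReal 0 ((b ^ 2).toNNReal))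
    (τ : ℝ) (hτ : 0 < τ)
    (σ21 σ22 ρ : ℝ)
    (hσ21 : σ21 = σ ^ 2 + τ ^ 2 * b ^ 2)
    (hσ22 : σ22 = σ ^ 2 + b ^ 2 / τ ^ 2)
    (hρ : ρ = (σ ^ 2 - b ^ 2) / Real.sqrt (σ21 * σ22)) :
    ∀ᵐ x ∂(P.map (fun ω => X ω + τ * W ω)),
      condDistrib (fun ω => X ω - (1 / τ) * W ω) (fun ω => X ω + τ * W ω) P x
        = gaussianReal (μ + ρ * (Real.sqrt σ22 / Real.sqrt σ21) * (x - μ))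
            ((σ22 * (1 - ρ ^ 2)).toNNReal) := by
  have hXg : HasGaussianLaw X P := ⟨hXlaw ▸ inferInstance⟩
  have hWg : HasGaussianLaw W P := ⟨hWlaw ▸ inferInstance⟩
  have hEX := integral_eq_of_map_eq_gaussianReal hXlaw
  have hEW := integral_eq_of_map_eq_gaussianReal hWlaw
  have hVX : Var[X; P] = σ ^ 2 := by
    rw [variance_eq_of_map_eq_gaussianReal hXlaw, Real.coe_toNNReal _ (sq_nonneg σ)]
  have hVW : Var[W; P] = b ^ 2 := by
    rw [variance_eq_of_map_eq_gaussianReal hWlaw, Real.coe_toNNReal _ (sq_nonneg b)]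
  have hcov := hXW.covariance_const_mul_add_const_mul hXg.memLp_two hWg.memLp_two
  have hE := integral_const_mul_add_const_mul hXg.integrable hWg.integrable
  set X₁ := fun ω => 1 * X ω + τ * W ω
  set X₂ := fun ω => 1 * X ω + (-(1 / τ)) * W ω
  have hE₁ : P[X₁] = μ := by rw [hE, hEX, hEW]; ring
  have hE₂ : P[X₂] = μ := by rw [hE, hEX, hEW]; ring
  have hV₁ : Var[X₁; P] = σ21 := by
    rw [← covariance_self (by fun_prop), hcov, hVX, hVW, hσ21]; ring
  have hV₂ : Var[X₂; P] = σ22 := by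
    rw [← covariance_self (by fun_prop), hcov, hVX, hVW, hσ22]; ring
  have hC : cov[X₁, X₂; P] = σ ^ 2 - b ^ 2 := by
    rw [hcov, hVX, hVW]; field_simp; ring
  have hσ21_pos : 0 < σ21 := by rw [hσ21]; positivity
  have hσ22_pos : 0 < σ22 := by rw [hσ22]; positivity
  rw [show (fun ω => X ω + τ * W ω) = X₁ by simp [X₁],
    show (fun ω => X ω - (1 / τ) * W ω) = X₂ by ext; simp only [X₂]; ring]
  filter_upwards [(hXW.hasGaussianLaw hXg hWg).prodMk_linearComb 1 τ 1 (-(1 / τ))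
    |>.condDistrib_ae_eq_gaussianReal (hV₁ ▸ hσ21_pos.ne')] with x hx
  rw [hx, hE₁, hE₂, hC, hV₁, hV₂, hρ, Real.div_sqrt_mul_mul_sqrt_div_sqrt _ hσ21_pos hσ22_pos,
    Real.mul_one_sub_div_sqrt_mul_sq _ hσ21_pos hσ22_pos]

/-- The conditional distribution of `X⁽²⁾` given `X⁽¹⁾ = x` after Gaussian data fission with
plug-in noise variance `b²` is `N(μ + ρ(σ₂/σ₁)(x - μ), σ²₂(1 - ρ²))`, for almost every `x`
with respect to the law of `X⁽¹⁾`. -/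
theorem fission_conditional_distribution
    {Ω : Type*} [MeasurableSpace Ω] (P : Measure Ω) [IsProbabilityMeasure P]
    (X W : Ω → ℝ) (hX : Measurable X) (hW : Measurable W)
    (hXW : IndepFun X W P)
    (μ σ b : ℝ) (hσ : 0 < σ) (hb : 0 < b)
    (hXlaw : P.map X = gaussianReal μ ((σ ^ 2).toNNReal))
    (hWlaw : P.map W = gaussianReal 0 ((b ^ 2).toNNReal))
    (τ : ℝ) (hτ : 0 < τ)
    (σ21 σ22 ρ : ℝ)
    (hσ21 : σ21 = σ ^ 2 + τ ^ 2 * b ^ 2)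
    (hσ22 : σ22 = σ ^ 2 + b ^ 2 / τ ^ 2)
    (hρ : ρ = (σ ^ 2 - b ^ 2) / Real.sqrt (σ21 * σ22)) :
    ∀ᵐ x ∂(P.map (fun ω => X ω + τ * W ω)),
      condDistrib (fun ω => X ω - (1 / τ) * W ω) (fun ω => X ω + τ * W ω) P x
        = gaussianReal (μ + ρ * (Real.sqrt σ22 / Real.sqrt σ21) * (x - μ))
            ((σ22 * (1 - ρ ^ 2)).toNNReal) :=
  fission_conditional_distribution_general P X W hXW μ σ b hb hXlaw hWlaw τ hτ σ21 σ22 ρ hσ21 hσ22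
    hρ
end
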